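/- The effective resistance distance R(v1,v2) = (e_{v1} − e_{v2})ᵀ L⁺ (e_{v1} − e_{v2}) on the vertices of a finite simple connected weighted graph satisfies the triangle inequality, and hence is a metric on V. -/

import Mathlib

open Matrix

/-!
Write `φ a b = L⁺ (e a - e b)`, so that `R a b = φ a b a - φ a b b`. By the maximum principle on
the connected graph, `ker L` consists of the constants. Since `L (L L⁺) = L`, the vector
`x - L L⁺ x` lies in `ker L`; when `x` sums to zero so does it (columns of `L` sum to zero), hence
`L L⁺ x = x`. In particular `L (φ a b) = e a - e b`, which is `≤ 0` away from `a`, so the maximum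
principle puts the maximum of `φ a b` at `a` and, since `φ b a = -φ a b`, its minimum at `b`.
Finally `φ a c = φ a b + φ b c`, and `φ a b c ≥ φ a b b`, `φ b c a ≤ φ b c b` give the triangle
inequality.
-/

theorem Matrix.mul_mul_eq_self_of_isSymm {n : Type*} [Fintype n] {A B : Matrix n n ℝ}
    (hA : A.IsSymm) (hAB : (A * B).IsSymm) (hABA : A * B * A = A) : A * (A * B) = A := by
  calc A * (A * B) = Aᵀ * (A * B)ᵀ := by rw [hA.eq, hAB.eq]
    _ = A := by rw [← transpose_mul, hABA, hA.eq]

section WeightedLaplacian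

variable {V : Type*} [Fintype V] [DecidableEq V] {w : V → V → ℝ} {G : SimpleGraph V}
  {Lp : Matrix V V ℝ}

noncomputable def weightedLaplacian (w : V → V → ℝ) : Matrix V V ℝ :=
  diagonal (fun u => ∑ k, w u k) - of w

theorem weightedLaplacian_mulVec_apply (w : V → V → ℝ) (y : V → ℝ) (v : V) :
    (weightedLaplacian w *ᵥ y) v = ∑ k, w v k * (y v - y k) := by
  rw [weightedLaplacian, sub_mulVec, Pi.sub_apply, mulVec_diagonal, Finset.sum_mul]
  simp only [mulVec, dotProduct, of_apply, mul_sub, Finset.sum_sub_distrib]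

theorem weightedLaplacian_transpose (hsym : ∀ u v, w u v = w v u) :
    (weightedLaplacian w)ᵀ = weightedLaplacian w := by
  ext u v
  rcases eq_or_ne u v with rfl | huv
  · simp [weightedLaplacian]
  · simp [weightedLaplacian, diagonal_apply_ne _ huv, diagonal_apply_ne _ huv.symm, hsym u v]

theorem weightedLaplacian_mulVec_one (w : V → V → ℝ) : weightedLaplacian w *ᵥ 1 = 0 := by
  ext v
  simp [weightedLaplacian_mulVec_apply]

theorem sum_weightedLaplacian_mulVec (hsym : ∀ u v, w u v = w v u) (y : V → ℝ) :
    ∑ v, (weightedLaplacian w *ᵥ y) v = 0 := by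
  calc ∑ v, (weightedLaplacian w *ᵥ y) v = 1 ⬝ᵥ weightedLaplacian w *ᵥ y := by
        simp [dotProduct]
    _ = (weightedLaplacian w)ᵀ *ᵥ 1 ⬝ᵥ y := by rw [dotProduct_mulVec, mulVec_transpose]
    _ = 0 := by
      rw [weightedLaplacian_transpose hsym, weightedLaplacian_mulVec_one, zero_dotProduct]

theorem eq_of_isMax_of_weightedLaplacian_mulVec_nonpos (hnn : ∀ u v, 0 ≤ w u v) {y : V → ℝ}
    {u v : V} (hmax : ∀ k, y k ≤ y v) (hv : (weightedLaplacian w *ᵥ y) v ≤ 0)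
    (hu : 0 < w v u) : y u = y v := by
  have hterm : ∀ k ∈ Finset.univ, 0 ≤ w v k * (y v - y k) := fun k _ =>
    mul_nonneg (hnn v k) (sub_nonneg.2 (hmax k))
  rw [weightedLaplacian_mulVec_apply] at hv
  have hzero := (Finset.sum_eq_zero_iff_of_nonneg hterm).1
    (le_antisymm hv (Finset.sum_nonneg hterm)) u (Finset.mem_univ u)
  linarith [(mul_eq_zero.1 hzero).resolve_left hu.ne']

theorem le_of_weightedLaplacian_mulVec_nonpos (hnn : ∀ u v, 0 ≤ w u v)
    (hadj : ∀ u v, G.Adj u v → 0 < w u v) (hconn : G.Connected) {y : V → ℝ} {a : V}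
    (hy : ∀ v, v ≠ a → (weightedLaplacian w *ᵥ y) v ≤ 0) (v : V) : y v ≤ y a := by
  obtain ⟨m, -, hm⟩ := Finset.exists_max_image Finset.univ y ⟨a, Finset.mem_univ a⟩
  suffices y a = y m from this ▸ hm v (Finset.mem_univ v)
  by_contra ha
  obtain ⟨d, -, hd₁, hd₂⟩ :=
    (hconn.preconnected m a).some.exists_boundary_dart {u | y u = y m} rfl ha
  have hd : y d.fst = y m := hd₁
  have hdmax : ∀ k, y k ≤ y d.fst := hd ▸ fun k => hm k (Finset.mem_univ k)
  refine hd₂ ((eq_of_isMax_of_weightedLaplacian_mulVec_nonpos hnn hdmax (hy _ ?_)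
    (hadj _ _ d.adj)).trans hd)
  rintro rfl
  exact ha hd

theorem eq_of_weightedLaplacian_mulVec_eq_zero (hnn : ∀ u v, 0 ≤ w u v)
    (hadj : ∀ u v, G.Adj u v → 0 < w u v) (hconn : G.Connected) {y : V → ℝ}
    (hy : weightedLaplacian w *ᵥ y = 0) (u v : V) : y u = y v := by
  have hnonpos : ∀ a v, v ≠ a → (weightedLaplacian w *ᵥ y) v ≤ 0 := by simp [hy]
  exact le_antisymm (le_of_weightedLaplacian_mulVec_nonpos hnn hadj hconn (hnonpos v) u)
    (le_of_weightedLaplacian_mulVec_nonpos hnn hadj hconn (hnonpos u) v)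

theorem weightedLaplacian_mulVec_pinv_mulVec (hsym : ∀ u v, w u v = w v u)
    (hnn : ∀ u v, 0 ≤ w u v) (hadj : ∀ u v, G.Adj u v → 0 < w u v) (hconn : G.Connected)
    (hmp1 : weightedLaplacian w * Lp * weightedLaplacian w = weightedLaplacian w)
    (hmp3 : (weightedLaplacian w * Lp)ᵀ = weightedLaplacian w * Lp) {x : V → ℝ}
    (hx : ∑ v, x v = 0) : weightedLaplacian w *ᵥ (Lp *ᵥ x) = x := by
  have hLy : weightedLaplacian w *ᵥ (x - weightedLaplacian w *ᵥ (Lp *ᵥ x)) = 0 := by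
    rw [mulVec_sub, mulVec_mulVec, mulVec_mulVec, Matrix.mul_assoc,
      mul_mul_eq_self_of_isSymm (weightedLaplacian_transpose hsym) hmp3 hmp1, sub_self]
  have hsum : ∑ v, (x - weightedLaplacian w *ᵥ (Lp *ᵥ x)) v = 0 := by
    simp only [Pi.sub_apply, Finset.sum_sub_distrib, hx, sum_weightedLaplacian_mulVec hsym,
      sub_self]
  have hy : x - weightedLaplacian w *ᵥ (Lp *ᵥ x) = 0 := by
    ext v
    have hconst := eq_of_weightedLaplacian_mulVec_eq_zero hnn hadj hconn hLy
    rw [Finset.sum_congr rfl fun u _ => hconst u v, Finset.sum_const, nsmul_eq_mul] at hsum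
    exact (mul_eq_zero.1 hsum).resolve_left
      (Nat.cast_ne_zero.2 (Finset.card_pos.2 ⟨v, Finset.mem_univ v⟩).ne')
  exact (sub_eq_zero.1 hy).symm

theorem pinv_mulVec_single_sub_le (hsym : ∀ u v, w u v = w v u)
    (hnn : ∀ u v, 0 ≤ w u v) (hadj : ∀ u v, G.Adj u v → 0 < w u v) (hconn : G.Connected)
    (hmp1 : weightedLaplacian w * Lp * weightedLaplacian w = weightedLaplacian w)
    (hmp3 : (weightedLaplacian w * Lp)ᵀ = weightedLaplacian w * Lp) (a b v : V) :
    (Lp *ᵥ (Pi.single a 1 - Pi.single b 1 : V → ℝ)) v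
      ≤ (Lp *ᵥ (Pi.single a 1 - Pi.single b 1 : V → ℝ)) a := by
  have hsum : ∑ v, (Pi.single a 1 - Pi.single b 1 : V → ℝ) v = 0 := by simp
  refine le_of_weightedLaplacian_mulVec_nonpos hnn hadj hconn (fun u hu => ?_) v
  rw [weightedLaplacian_mulVec_pinv_mulVec hsym hnn hadj hconn hmp1 hmp3 hsum]
  simp only [Pi.sub_apply, Pi.single_apply, if_neg hu]
  split_ifs <;> norm_num

end WeightedLaplacian

theorem effectiveResistance_triangle_general {V : Type*} [Fintype V] [DecidableEq V]
    (w : V → V → ℝ) (hsym : ∀ u v, w u v = w v u) (hnn : ∀ u v, 0 ≤ w u v)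
    (hdiag : ∀ v, w v v = 0)
    (G : SimpleGraph V) (hG : ∀ u v, G.Adj u v ↔ u ≠ v ∧ 0 < w u v)
    (hconn : G.Connected)
    (L : Matrix V V ℝ)
    (hL : ∀ u v, L u v = if u = v then ∑ k, w u k else -(w u v))
    (Lp : Matrix V V ℝ)
    (hmp1 : L * Lp * L = L)
    (hmp3 : (L * Lp)ᵀ = L * Lp)
    (R : V → V → ℝ)
    (hR : ∀ v1 v2, R v1 v2 =
      dotProduct (Pi.single v1 1 - Pi.single v2 1)
        (Lp.mulVec (Pi.single v1 1 - Pi.single v2 1))) :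
    ∀ v1 v2 v3 : V, R v1 v3 ≤ R v1 v2 + R v2 v3 := by
  have hLw : L = weightedLaplacian w := by
    ext u v
    rcases eq_or_ne u v with rfl | huv
    · simp [hL, weightedLaplacian, hdiag]
    · simp [hL, weightedLaplacian, huv]
  subst hLw
  set φ : V → V → V → ℝ := fun a b => Lp *ᵥ (Pi.single a 1 - Pi.single b 1)
  have hmax : ∀ a b v, φ a b v ≤ φ a b a := pinv_mulVec_single_sub_le hsym hnn
    (fun u v h => ((hG u v).1 h).2) hconn hmp1 hmp3
  have hswap : ∀ a b, φ b a = -φ a b := fun a b => by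
    rw [← mulVec_neg, neg_sub]
  have hadd : ∀ a b c, φ a c = φ a b + φ b c := fun a b c => by
    rw [← mulVec_add, sub_add_sub_cancel]
  have hRφ : ∀ a b, R a b = φ a b a - φ a b b := fun a b => by
    rw [hR, sub_dotProduct, single_dotProduct, single_dotProduct, one_mul, one_mul]
  intro v1 v2 v3
  have hmin := hmax v2 v1 v3
  simp only [hRφ, hadd v1 v2 v3, hswap v1 v2, Pi.add_apply, Pi.neg_apply] at hmin ⊢
  linarith [hmax v2 v3 v1]

/-- The effective resistance distance on the vertices of a finite simple
connected weighted graph satisfies the triangle inequality. -/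
theorem effectiveResistance_triangle {V : Type*} [Fintype V] [DecidableEq V]
    (w : V → V → ℝ) (hsym : ∀ u v, w u v = w v u) (hnn : ∀ u v, 0 ≤ w u v)
    (hdiag : ∀ v, w v v = 0)
    (G : SimpleGraph V) (hG : ∀ u v, G.Adj u v ↔ u ≠ v ∧ 0 < w u v)
    (hconn : G.Connected)
    (L : Matrix V V ℝ)
    (hL : ∀ u v, L u v = if u = v then ∑ k, w u k else -(w u v))
    (Lp : Matrix V V ℝ)
    (hmp1 : L * Lp * L = L) (hmp2 : Lp * L * Lp = Lp)
    (hmp3 : (L * Lp)ᵀ = L * Lp) (hmp4 : (Lp * L)ᵀ = Lp * L)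
    (R : V → V → ℝ)
    (hR : ∀ v1 v2, R v1 v2 =
      dotProduct (Pi.single v1 1 - Pi.single v2 1)
        (Lp.mulVec (Pi.single v1 1 - Pi.single v2 1))) :
    ∀ v1 v2 v3 : V, R v1 v3 ≤ R v1 v2 + R v2 v3 :=
  effectiveResistance_triangle_general w hsym hnn hdiag G hG hconn L hL Lp hmp1 hmp3 R hR
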